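/- Let σ : [0,∞) → ℝ be continuous and satisfy 0 < σ̲ ≤ σ(x) ≤ σ̄ < ∞ for all x ≥ 0 and the Hölder condition |σ(e^x) − σ(e^y)| ≤ M|x − y|^α for all x, y ∈ ℝ (for some constants M, α > 0). Fix S₀ > 0, κ > 0 and τ ∈ (0,1). Then I_f(S₀, κ, τ) = inf over c ∈ ℝ of { (1/2)c²τ + (1/(1−τ)) · I_float(S₀ · exp(F⁻¹(cτ)), κ) }, where F : ℝ → ℝ is the strictly increasing bijection F(y) = ∫₀^y dz/σ(S₀ e^z). -/

import Mathlib

open MeasureTheory Set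

/-- The energy `(1/2)∫₀¹ (f'(t)/σ(x·e^{f(t)}))² dt` of a path `f` (with derivative `g`)
in the local volatility model with volatility function `σ` and initial price `x`. -/
noncomputable def energyLV (σ : ℝ → ℝ) (x : ℝ) (f g : ℝ → ℝ) : ℝ :=
  (1 / 2) * ∫ t in (0:ℝ)..1, (g t / σ (x * Real.exp (f t))) ^ 2

/-- `IsACLV σ x f g` expresses that `f` is absolutely continuous on `[0,1]` with
`f 0 = 0`: `g` is its (integrable) derivative, the energy integrand is integrable,
and `f t = ∫₀ᵗ g(s) ds` on `[0,1]`. -/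
def IsACLV (σ : ℝ → ℝ) (x : ℝ) (f g : ℝ → ℝ) : Prop :=
  IntervalIntegrable g volume 0 1 ∧
  IntervalIntegrable (fun t => (g t / σ (x * Real.exp (f t))) ^ 2) volume 0 1 ∧
  ∀ t ∈ Icc (0:ℝ) 1, f t = ∫ s in (0:ℝ)..t, g s

/-- The rate function `I_f(S₀, κ, τ)` for a forward start floating-strike Asian option
in the local volatility model: the infimum of `(1/2)∫₀¹ (f'(t)/σ(S₀·e^{f(t)}))² dt`
over absolutely continuous `f` with `f(0) = 0` and
`(1/(1−τ))∫_τ¹ e^{f(t)} dt = κ·e^{f(1)}`. -/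
noncomputable def Ifloatfwd (σ : ℝ → ℝ) (S₀ κ τ : ℝ) : ℝ :=
  sInf { E | ∃ f g : ℝ → ℝ, IsACLV σ S₀ f g ∧
    (1 / (1 - τ)) * (∫ t in τ..1, Real.exp (f t)) = κ * Real.exp (f 1) ∧
    E = energyLV σ S₀ f g }

/-- The rate function `I_float(x, κ)` for a floating-strike Asian option with averaging
starting at time zero in the local volatility model: the infimum of
`(1/2)∫₀¹ (φ'(u)/σ(x·e^{φ(u)}))² du` over absolutely continuous `φ` with `φ(0) = 0`
and `∫₀¹ e^{φ(u)} du = κ·e^{φ(1)}`. -/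
noncomputable def Ifloat (σ : ℝ → ℝ) (x κ : ℝ) : ℝ :=
  sInf { E | ∃ φ g : ℝ → ℝ, IsACLV σ x φ g ∧
    (∫ u in (0:ℝ)..1, Real.exp (φ u)) = κ * Real.exp (φ 1) ∧
    E = energyLV σ x φ g }

/-!
Split an admissible path `f` at time `τ`. On `[0, τ]` the chain rule for absolutely continuous
functions gives `∫₀^τ f'/σ(S₀e^f) = F(f(τ))`, so by Cauchy–Schwarz the energy there is at least
`F(f(τ))²/(2τ) = c²τ/2` with `c = F(f(τ))/τ`; the path `t ↦ F⁻¹(ct)` of constant speed `c` attains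
this bound. On `[τ, 1]` the rescaled increment `u ↦ f(τ + (1-τ)u) - f(τ)` is admissible for
`I_float` started at `S₀e^{f(τ)} = S₀e^{F⁻¹(cτ)}`, with `1 - τ` times the energy of `f` on `[τ, 1]`.
Conversely, gluing `F⁻¹(ct)` to any such rescaled path gives an admissible path for `I_f`.
-/

open intervalIntegral

theorem LipschitzWith.comp_absolutelyContinuousOnInterval {X Y : Type*} [PseudoMetricSpace X]
    [PseudoMetricSpace Y] {F : X → Y} {f : ℝ → X} {K : NNReal} {a b : ℝ}
    (hF : LipschitzWith K F) (hf : AbsolutelyContinuousOnInterval f a b) :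
    AbsolutelyContinuousOnInterval (F ∘ f) a b := by
  rw [absolutelyContinuousOnInterval_iff] at hf ⊢
  intro ε hε
  obtain ⟨δ, hδ, hfδ⟩ := hf (ε / (K + 1)) (by positivity)
  refine ⟨δ, hδ, fun E hE hEδ => ?_⟩
  calc ∑ i ∈ Finset.range E.1, dist (F (f (E.2 i).1)) (F (f (E.2 i).2))
      ≤ ∑ i ∈ Finset.range E.1, (K + 1) * dist (f (E.2 i).1) (f (E.2 i).2) := by
        gcongr with i
        exact (hF.dist_le_mul _ _).trans (by gcongr; linarith)
    _ = (K + 1) * ∑ i ∈ Finset.range E.1, dist (f (E.2 i).1) (f (E.2 i).2) :=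
        (Finset.mul_sum _ _ _).symm
    _ < (K + 1) * (ε / (K + 1)) := by gcongr; exact hfδ E hE hEδ
    _ = ε := by field_simp

theorem AbsolutelyContinuousOnInterval.integral_comp_mul_deriv {F F' f : ℝ → ℝ} {K : NNReal}
    {a b : ℝ} (hf : AbsolutelyContinuousOnInterval f a b)
    (hF : ∀ y, HasDerivAt F (F' y) y) (hFK : LipschitzWith K F) :
    ∫ x in a..b, F' (f x) * deriv f x = F (f b) - F (f a) := by
  have hFTC := (hFK.comp_absolutelyContinuousOnInterval hf).integral_deriv_eq_sub
  rw [Function.comp_apply, Function.comp_apply] at hFTC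
  rw [← hFTC]
  refine integral_congr_ae ?_
  filter_upwards [hf.ae_differentiableAt] with x hx hxab
  exact (((hF (f x)).comp x (hx (uIoc_subset_uIcc hxab)).hasDerivAt).deriv).symm

theorem IntervalIntegrable.integral_comp_primitive_mul {ψ g : ℝ → ℝ} {C : NNReal} {a b : ℝ}
    (hg : IntervalIntegrable g volume a b) (hψ : Continuous ψ) (hψC : ∀ y, ‖ψ y‖₊ ≤ C) :
    ∫ x in a..b, ψ (∫ t in a..x, g t) * g x = ∫ y in (0:ℝ)..(∫ t in a..b, g t), ψ y := by
  set F : ℝ → ℝ := fun y => ∫ z in (0:ℝ)..y, ψ z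
  have hF : ∀ y, HasDerivAt F (ψ y) y := fun y => (hψ.integral_hasStrictDerivAt 0 y).hasDerivAt
  have hFK : LipschitzWith C F :=
    lipschitzWith_of_nnnorm_deriv_le (fun y => (hF y).differentiableAt)
      fun y => (hF y).deriv ▸ hψC y
  have hac := hg.absolutelyContinuousOnInterval_intervalIntegral (c := a) left_mem_uIcc
  have hchain := hac.integral_comp_mul_deriv hF hFK
  simp only [integral_same, F, sub_zero] at hchain
  rw [← hchain]
  refine integral_congr_ae ?_
  filter_upwards [hg.ae_hasDerivAt_integral] with x hx hxab
  rw [(hx (uIoc_subset_uIcc hxab) a left_mem_uIcc).deriv]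

theorem sq_integral_le_mul_integral_sq {u : ℝ → ℝ} {a b : ℝ} (hab : a ≤ b)
    (hu : IntervalIntegrable u volume a b)
    (hu2 : IntervalIntegrable (fun t => u t ^ 2) volume a b) :
    (∫ t in a..b, u t) ^ 2 ≤ (b - a) * ∫ t in a..b, u t ^ 2 := by
  rcases hab.eq_or_lt with rfl | hlt
  · simp
  set m := (∫ t in a..b, u t) / (b - a)
  have hm : m * (b - a) = ∫ t in a..b, u t := div_mul_cancel₀ _ (sub_pos.2 hlt).ne'
  have hvar : 0 ≤ ∫ t in a..b, (u t - m) ^ 2 := integral_nonneg hab fun t _ => sq_nonneg _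
  have hexpand : ∫ t in a..b, (u t - m) ^ 2
      = (∫ t in a..b, u t ^ 2) - 2 * m * (∫ t in a..b, u t) + m ^ 2 * (b - a) := by
    simp_rw [sub_sq]
    rw [integral_add (hu2.sub ((hu.const_mul 2).mul_const m)) intervalIntegrable_const,
      integral_sub hu2 ((hu.const_mul 2).mul_const m), intervalIntegral.integral_mul_const,
      intervalIntegral.integral_const_mul, intervalIntegral.integral_const, smul_eq_mul]
    ring
  nlinarith [sq_nonneg m]

theorem StrictMono.hasDerivAt_rightInverse {G G' Ginv : ℝ → ℝ} (hG : StrictMono G)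
    (hRight : Function.RightInverse Ginv G) (hG' : ∀ y, HasDerivAt G (G' y) y)
    (hG'0 : ∀ y, G' y ≠ 0) (u : ℝ) : HasDerivAt Ginv (G' (Ginv u))⁻¹ u :=
  (hG' (Ginv u)).of_local_left_inverse
    (hG.orderIsoOfRightInverse G Ginv hRight).symm.continuous.continuousAt (hG'0 _)
    (Filter.Eventually.of_forall hRight)

theorem intervalIntegrable_comp_affine_iff {h : ℝ → ℝ} {a b : ℝ} (hab : a ≠ b) :
    IntervalIntegrable (fun u => h ((b - a) * u + a)) volume 0 1 ↔
      IntervalIntegrable h volume a b := by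
  have hba : b - a ≠ 0 := sub_ne_zero.2 hab.symm
  have hscale := IntervalIntegrable.comp_mul_left_iff (f := fun y => h (y + a)) (a := 0)
    (b := b - a) hba
  rw [zero_div, div_self hba] at hscale
  rw [hscale, IntervalIntegrable.comp_add_right_iff, zero_add, sub_add_cancel]

theorem intervalIntegrable_mul_comp_affine_iff {h : ℝ → ℝ} {a b c : ℝ} (hab : a ≠ b)
    (hc : c ≠ 0) :
    IntervalIntegrable (fun u => c * h ((b - a) * u + a)) volume 0 1 ↔
      IntervalIntegrable h volume a b := by
  rw [← intervalIntegrable_comp_affine_iff hab]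
  refine ⟨fun hh => ?_, fun hh => hh.const_mul c⟩
  simpa only [inv_mul_cancel_left₀ hc] using hh.const_mul c⁻¹

theorem integral_exp_mul_of_ne_zero {a : ℝ} (ha : a ≠ 0) :
    ∫ u in (0:ℝ)..1, Real.exp (a * u) = (Real.exp a - 1) / a := by
  rw [integral_comp_mul_left Real.exp ha, integral_exp, mul_one, mul_zero, Real.exp_zero,
    smul_eq_mul, inv_mul_eq_div]

theorem exists_integral_exp_mul_eq {κ : ℝ} (hκ : 0 < κ) :
    ∃ a : ℝ, ∫ u in (0:ℝ)..1, Real.exp (a * u) = κ * Real.exp a := by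
  set Φ : ℝ → ℝ := fun a => (∫ u in (0:ℝ)..1, Real.exp (a * u)) - κ * Real.exp a
  have hΦ : Continuous Φ :=
    (continuous_parametric_intervalIntegral_of_continuous' (by fun_prop) 0 1).sub (by fun_prop)
  have hneg : Φ (1 / κ) ≤ 0 := by
    simp only [Φ, integral_exp_mul_of_ne_zero (one_div_pos.2 hκ).ne']
    field_simp
    linarith
  have hpos : 0 ≤ Φ (-(2 * κ)) := by
    have hquad := Real.quadratic_le_exp_of_nonneg (by positivity : 0 ≤ 2 * κ)
    simp only [Φ]
    rw [integral_exp_mul_of_ne_zero (neg_ne_zero.2 (by positivity)), Real.exp_neg]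
    field_simp
    nlinarith
  obtain ⟨a, ha⟩ := intermediate_value_univ (1 / κ) (-(2 * κ)) hΦ ⟨hneg, hpos⟩
  exact ⟨a, sub_eq_zero.1 ha⟩

theorem csInf_eq_ciInf_add_mul_csInf {ι : Type*} [Nonempty ι] {S : Set ℝ} {T : ι → Set ℝ}
    {A : ι → ℝ} {k : ℝ} (hk : 0 < k) (hA : ∀ i, 0 ≤ A i) (hT : ∀ i, (T i).Nonempty)
    (hT0 : ∀ i, ∀ e ∈ T i, 0 ≤ e) (hmem : ∀ i, ∀ e ∈ T i, A i + k * e ∈ S)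
    (hle : ∀ s ∈ S, ∃ i, ∃ e ∈ T i, A i + k * e ≤ s) :
    sInf S = ⨅ i, (A i + k * sInf (T i)) := by
  have hTbdd : ∀ i, BddBelow (T i) := fun i => ⟨0, hT0 i⟩
  have hSbdd : BddBelow S := ⟨0, fun s hs => by
    obtain ⟨i, e, he, hes⟩ := hle s hs
    nlinarith [hA i, hT0 i e he]⟩
  apply le_antisymm
  · refine le_ciInf fun i => ?_
    have hlow : (sInf S - A i) / k ≤ sInf (T i) := le_csInf (hT i) fun e he => by
      rw [div_le_iff₀ hk]
      linarith [csInf_le hSbdd (hmem i e he)]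
    rw [div_le_iff₀ hk] at hlow
    linarith
  · obtain ⟨e, he⟩ := hT (Classical.arbitrary ι)
    refine le_csInf ⟨_, hmem _ e he⟩ fun s hs => ?_
    obtain ⟨i, e, he, hes⟩ := hle s hs
    have hrange : BddBelow (range fun i => A i + k * sInf (T i)) :=
      ⟨0, forall_mem_range.2 fun i =>
        add_nonneg (hA i) (mul_nonneg hk.le (Real.sInf_nonneg (hT0 i)))⟩
    calc ⨅ i, (A i + k * sInf (T i)) ≤ A i + k * sInf (T i) := ciInf_le hrange i
      _ ≤ A i + k * e := by gcongr; exact csInf_le (hTbdd i) he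
      _ ≤ s := hes

def tailPath (τ : ℝ) (f : ℝ → ℝ) (u : ℝ) : ℝ := f ((1 - τ) * u + τ) - f τ

def tailDeriv (τ : ℝ) (g : ℝ → ℝ) (u : ℝ) : ℝ := (1 - τ) * g ((1 - τ) * u + τ)

theorem tailPath_eq_integral {f g : ℝ → ℝ} {τ u : ℝ} (hτ : τ ∈ Ico (0:ℝ) 1)
    (hg : IntervalIntegrable g volume 0 1) (hfg : ∀ t ∈ Icc (0:ℝ) 1, f t = ∫ s in (0:ℝ)..t, g s)
    (hu : u ∈ Icc (0:ℝ) 1) :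
    tailPath τ f u = ∫ s in (0:ℝ)..u, tailDeriv τ g s := by
  have h1τ : 1 - τ ≠ 0 := sub_ne_zero.2 hτ.2.ne'
  have hτ01 : τ ∈ Icc (0:ℝ) 1 := ⟨hτ.1, hτ.2.le⟩
  have ht : (1 - τ) * u + τ ∈ Icc (0:ℝ) 1 :=
    ⟨by nlinarith [hτ.1, hτ.2, hu.1], by nlinarith [hτ.2, hu.2]⟩
  have hsub : ∀ y ∈ Icc (0:ℝ) 1, IntervalIntegrable g volume 0 y := fun y hy =>
    hg.mono_set (uIcc_subset_uIcc left_mem_uIcc (by rwa [uIcc_of_le zero_le_one]))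
  simp only [tailPath, tailDeriv, intervalIntegral.integral_const_mul]
  rw [integral_comp_mul_add (fun t => g t) h1τ, mul_zero, zero_add, smul_eq_mul,
    mul_inv_cancel_left₀ h1τ, hfg _ ht, hfg τ hτ01,
    integral_interval_sub_left (hsub _ ht) (hsub τ hτ01)]

theorem intervalIntegrable_tailDeriv_iff {g : ℝ → ℝ} {τ : ℝ} (hτ : τ ≠ 1) :
    IntervalIntegrable (tailDeriv τ g) volume 0 1 ↔ IntervalIntegrable g volume τ 1 :=
  intervalIntegrable_mul_comp_affine_iff hτ (sub_ne_zero.2 hτ.symm)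

theorem fwd_constraint_iff_tail {f : ℝ → ℝ} {κ τ : ℝ} (hτ : τ ≠ 1) :
    1 / (1 - τ) * (∫ t in τ..1, Real.exp (f t)) = κ * Real.exp (f 1) ↔
      (∫ u in (0:ℝ)..1, Real.exp (tailPath τ f u)) = κ * Real.exp (tailPath τ f 1) := by
  have h1τ : 1 - τ ≠ 0 := sub_ne_zero.2 hτ.symm
  have htail : ∫ u in (0:ℝ)..1, Real.exp (tailPath τ f u)
      = (1 / (1 - τ) * ∫ t in τ..1, Real.exp (f t)) / Real.exp (f τ) := by
    simp only [tailPath, Real.exp_sub, intervalIntegral.integral_div]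
    rw [integral_comp_mul_add (fun t => Real.exp (f t)) h1τ, mul_zero, zero_add, mul_one,
      sub_add_cancel, smul_eq_mul, one_div]
  rw [htail, tailPath, mul_one, sub_add_cancel, Real.exp_sub, mul_div_assoc',
    div_left_inj' (Real.exp_pos _).ne']

theorem float_constraint_congr {f φ : ℝ → ℝ} {κ : ℝ} (hf : EqOn f φ (Icc 0 1)) :
    (∫ u in (0:ℝ)..1, Real.exp (f u)) = κ * Real.exp (f 1) ↔
      (∫ u in (0:ℝ)..1, Real.exp (φ u)) = κ * Real.exp (φ 1) := by
  have hint : ∫ u in (0:ℝ)..1, Real.exp (f u) = ∫ u in (0:ℝ)..1, Real.exp (φ u) :=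
    integral_congr fun u hu => by
      rw [uIcc_of_le zero_le_one] at hu
      simp only [hf hu]
  rw [hint, hf ⟨zero_le_one, le_rfl⟩]

noncomputable def gluedDeriv (τ : ℝ) (q gφ : ℝ → ℝ) (t : ℝ) : ℝ :=
  if t ≤ τ then q t else gφ ((t - τ) / (1 - τ)) / (1 - τ)

theorem gluedDeriv_eqOn_Iic (τ : ℝ) (q gφ : ℝ → ℝ) : EqOn (gluedDeriv τ q gφ) q (Iic τ) :=
  fun _ ht => if_pos ht

theorem tailDeriv_gluedDeriv {τ : ℝ} (hτ : τ < 1) (q gφ : ℝ → ℝ) :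
    EqOn (tailDeriv τ (gluedDeriv τ q gφ)) gφ (Ioi 0) := fun u hu => by
  have h1τ : 1 - τ ≠ 0 := sub_ne_zero.2 hτ.ne'
  have hu' : ¬(1 - τ) * u + τ ≤ τ := by nlinarith [mem_Ioi.1 hu]
  simp only [tailDeriv, gluedDeriv, if_neg hu', add_sub_cancel_right, mul_div_cancel_left₀ _ h1τ,
    mul_div_cancel₀ _ h1τ]

theorem intervalIntegrable_gluedDeriv {τ : ℝ} (hτ : τ ∈ Ico (0:ℝ) 1) {q gφ : ℝ → ℝ}
    (hq : IntervalIntegrable q volume 0 τ) (hgφ : IntervalIntegrable gφ volume 0 1) :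
    IntervalIntegrable (gluedDeriv τ q gφ) volume 0 1 := by
  refine IntervalIntegrable.trans (hq.congr ?_) ((intervalIntegrable_tailDeriv_iff hτ.2.ne).1
    (hgφ.congr ?_))
  · rw [uIoc_of_le hτ.1]
    exact (gluedDeriv_eqOn_Iic τ q gφ).symm.mono Ioc_subset_Iic_self
  · rw [uIoc_of_le zero_le_one]
    exact (tailDeriv_gluedDeriv hτ.2 q gφ).symm.mono Ioc_subset_Ioi_self

theorem tailPath_primitive_gluedDeriv {τ : ℝ} (hτ : τ ∈ Ico (0:ℝ) 1) {q φ gφ : ℝ → ℝ}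
    (hq : IntervalIntegrable q volume 0 τ) (hgφ : IntervalIntegrable gφ volume 0 1)
    (hφ : ∀ u ∈ Icc (0:ℝ) 1, φ u = ∫ s in (0:ℝ)..u, gφ s) :
    EqOn (tailPath τ fun t => ∫ s in (0:ℝ)..t, gluedDeriv τ q gφ s) φ (Icc 0 1) := fun u hu => by
  rw [tailPath_eq_integral hτ (intervalIntegrable_gluedDeriv hτ hq hgφ) (fun t _ => rfl) hu,
    hφ u hu]
  refine integral_congr_ae (Filter.Eventually.of_forall fun s hs => ?_)
  rw [uIoc_of_le hu.1] at hs
  exact tailDeriv_gluedDeriv hτ.2 q gφ hs.1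

section LocalVolatility

variable {σ : ℝ → ℝ}

theorem continuous_comp_mul_exp (hcont : ContinuousOn σ (Ici 0)) {x : ℝ} (hx : 0 < x) :
    Continuous fun z => σ (x * Real.exp z) :=
  continuous_iff_continuousAt.2 fun z =>
    (hcont.continuousAt (Ici_mem_nhds (by positivity))).comp (by fun_prop)

theorem energyLV_nonneg (x : ℝ) (f g : ℝ → ℝ) : 0 ≤ energyLV σ x f g :=
  mul_nonneg (by norm_num) (integral_nonneg zero_le_one fun _ _ => sq_nonneg _)

theorem IsACLV.continuousOn {x : ℝ} {f g : ℝ → ℝ} (hf : IsACLV σ x f g) :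
    ContinuousOn f (Icc 0 1) := by
  have hprim := continuousOn_primitive_interval' hf.1 left_mem_uIcc
  rw [uIcc_of_le zero_le_one] at hprim
  exact hprim.congr hf.2.2

theorem IsACLV.congr {x : ℝ} {f g φ gφ : ℝ → ℝ} (h : IsACLV σ x φ gφ)
    (hf : EqOn f φ (Icc 0 1)) (hg : EqOn g gφ (Ioc 0 1)) : IsACLV σ x f g := by
  have hIoc : EqOn g gφ (uIoc 0 1) := by rwa [uIoc_of_le zero_le_one]
  refine ⟨(intervalIntegrable_congr hIoc).2 h.1, (intervalIntegrable_congr fun t ht => ?_).2 h.2.1,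
    fun t ht => ?_⟩
  · rw [uIoc_of_le zero_le_one] at ht
    simp only [hg ht, hf (Ioc_subset_Icc_self ht)]
  · rw [hf ht, h.2.2 t ht]
    refine integral_congr_ae (Filter.Eventually.of_forall fun s hs => (hg ?_).symm)
    rw [uIoc_of_le ht.1] at hs
    exact ⟨hs.1, hs.2.trans ht.2⟩

theorem energyLV_congr {x : ℝ} {f g φ gφ : ℝ → ℝ} (hf : EqOn f φ (Icc 0 1))
    (hg : EqOn g gφ (Ioc 0 1)) : energyLV σ x f g = energyLV σ x φ gφ := by
  unfold energyLV
  congr 1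
  refine integral_congr_ae (Filter.Eventually.of_forall fun t ht => ?_)
  rw [uIoc_of_le zero_le_one] at ht
  simp only [hg ht, hf (Ioc_subset_Icc_self ht)]

-- Needed because `sInf ∅ = 0` in `ℝ`: the admissible set of `I_float` must be nonempty.
theorem exists_float_path (hcont : ContinuousOn σ (Ici 0)) {σlo : ℝ} (hσlo : 0 < σlo)
    (hσ : ∀ x, 0 ≤ x → σlo ≤ σ x) {x κ : ℝ} (hx : 0 < x) (hκ : 0 < κ) :
    ∃ φ g : ℝ → ℝ, IsACLV σ x φ g ∧ (∫ u in (0:ℝ)..1, Real.exp (φ u)) = κ * Real.exp (φ 1) := by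
  obtain ⟨a, ha⟩ := exists_integral_exp_mul_eq hκ
  have hσx : ∀ t, σ (x * Real.exp (a * t)) ≠ 0 := fun t =>
    (hσlo.trans_le (hσ _ (by positivity))).ne'
  refine ⟨fun u => a * u, fun _ => a, ⟨intervalIntegrable_const, ?_, fun t _ => ?_⟩, ?_⟩
  · exact (continuous_const.div ((continuous_comp_mul_exp hcont hx).comp (by fun_prop))
      hσx).pow 2 |>.intervalIntegrable _ _
  · simp [mul_comm]
  · simpa using ha

theorem tail_integrand_eq (S₀ τ : ℝ) (f g : ℝ → ℝ) (u : ℝ) :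
    (tailDeriv τ g u / σ (S₀ * Real.exp (f τ) * Real.exp (tailPath τ f u))) ^ 2
      = (1 - τ) ^ 2 * (g ((1 - τ) * u + τ) / σ (S₀ * Real.exp (f ((1 - τ) * u + τ)))) ^ 2 := by
  rw [tailPath, mul_assoc, ← Real.exp_add, add_sub_cancel, tailDeriv, mul_div_assoc, mul_pow]

theorem intervalIntegrable_tail_integrand_iff {S₀ τ : ℝ} {f g : ℝ → ℝ} (hτ : τ ≠ 1) :
    IntervalIntegrable (fun u => (tailDeriv τ g u /
        σ (S₀ * Real.exp (f τ) * Real.exp (tailPath τ f u))) ^ 2) volume 0 1 ↔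
      IntervalIntegrable (fun t => (g t / σ (S₀ * Real.exp (f t))) ^ 2) volume τ 1 := by
  simp only [tail_integrand_eq]
  exact intervalIntegrable_mul_comp_affine_iff (h := fun t => (g t / σ (S₀ * Real.exp (f t))) ^ 2)
    hτ (pow_ne_zero 2 (sub_ne_zero.2 hτ.symm))

theorem IsACLV.tail {S₀ τ : ℝ} {f g : ℝ → ℝ} (hf : IsACLV σ S₀ f g) (hτ : τ ∈ Ico (0:ℝ) 1) :
    IsACLV σ (S₀ * Real.exp (f τ)) (tailPath τ f) (tailDeriv τ g) := by
  have hτ1 : uIcc τ 1 ⊆ uIcc 0 1 :=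
    uIcc_subset_uIcc_right (by rw [uIcc_of_le zero_le_one]; exact ⟨hτ.1, hτ.2.le⟩)
  exact ⟨(intervalIntegrable_tailDeriv_iff hτ.2.ne).2 (hf.1.mono_set hτ1),
    (intervalIntegrable_tail_integrand_iff hτ.2.ne).2 (hf.2.1.mono_set hτ1),
    fun u hu => tailPath_eq_integral hτ hf.1 hf.2.2 hu⟩

theorem isACLV_of_tail {S₀ τ : ℝ} {f g : ℝ → ℝ} (hτ : τ ≠ 1)
    (hg : IntervalIntegrable g volume 0 τ)
    (hQ : IntervalIntegrable (fun t => (g t / σ (S₀ * Real.exp (f t))) ^ 2) volume 0 τ)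
    (htail : IsACLV σ (S₀ * Real.exp (f τ)) (tailPath τ f) (tailDeriv τ g))
    (hfg : ∀ t ∈ Icc (0:ℝ) 1, f t = ∫ s in (0:ℝ)..t, g s) : IsACLV σ S₀ f g :=
  ⟨hg.trans ((intervalIntegrable_tailDeriv_iff hτ).1 htail.1),
    hQ.trans ((intervalIntegrable_tail_integrand_iff hτ).1 htail.2.1), hfg⟩

theorem energyLV_eq_head_add_tail {S₀ τ : ℝ} {f g : ℝ → ℝ} (hf : IsACLV σ S₀ f g)
    (hτ : τ ∈ Ico (0:ℝ) 1) :
    energyLV σ S₀ f g = 1 / 2 * (∫ t in (0:ℝ)..τ, (g t / σ (S₀ * Real.exp (f t))) ^ 2)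
      + 1 / (1 - τ) * energyLV σ (S₀ * Real.exp (f τ)) (tailPath τ f) (tailDeriv τ g) := by
  have h1τ : 1 - τ ≠ 0 := sub_ne_zero.2 hτ.2.ne'
  have hτ01 : τ ∈ uIcc (0:ℝ) 1 := by rw [uIcc_of_le zero_le_one]; exact ⟨hτ.1, hτ.2.le⟩
  unfold energyLV
  simp only [tail_integrand_eq, intervalIntegral.integral_const_mul]
  rw [integral_comp_mul_add (fun t => (g t / σ (S₀ * Real.exp (f t))) ^ 2) h1τ, mul_zero,
    zero_add, mul_one, sub_add_cancel, smul_eq_mul,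
    ← integral_add_adjacent_intervals (hf.2.1.mono_set (uIcc_subset_uIcc_left hτ01))
      (hf.2.1.mono_set (uIcc_subset_uIcc_right hτ01))]
  generalize ∫ t in (0:ℝ)..τ, (g t / σ (S₀ * Real.exp (f t))) ^ 2 = A
  generalize ∫ t in τ..1, (g t / σ (S₀ * Real.exp (f t))) ^ 2 = B
  field_simp

theorem continuous_mul_comp_rightInverse (hcont : ContinuousOn σ (Ici 0)) {S₀ : ℝ} (hS₀ : 0 < S₀)
    {F Finv : ℝ → ℝ} (hFmono : StrictMono F) (hRight : Function.RightInverse Finv F) (c : ℝ) :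
    Continuous fun s => c * σ (S₀ * Real.exp (Finv (c * s))) :=
  continuous_const.mul ((continuous_comp_mul_exp hcont hS₀).comp
    ((hFmono.orderIsoOfRightInverse F Finv hRight).symm.continuous.comp (continuous_const_mul c)))

variable (hcont : ContinuousOn σ (Ici 0)) {σlo : ℝ} (hσlo : 0 < σlo)
  (hσ : ∀ x, 0 ≤ x → σlo ≤ σ x) {S₀ : ℝ} (hS₀ : 0 < S₀) {F : ℝ → ℝ}
  (hF : ∀ y, F y = ∫ z in (0:ℝ)..y, 1 / σ (S₀ * Real.exp z))
include hcont hσlo hσ hS₀ hF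

theorem sq_le_mul_integral_head {f g : ℝ → ℝ} (hf : IsACLV σ S₀ f g) {τ : ℝ}
    (hτ : τ ∈ Ioc (0:ℝ) 1) :
    F (f τ) ^ 2 ≤ τ * ∫ t in (0:ℝ)..τ, (g t / σ (S₀ * Real.exp (f t))) ^ 2 := by
  have hσpos : ∀ z, 0 < σ (S₀ * Real.exp z) := fun z => hσlo.trans_le (hσ _ (by positivity))
  have hψ : Continuous fun z => 1 / σ (S₀ * Real.exp z) :=
    continuous_const.div (continuous_comp_mul_exp hcont hS₀) fun z => (hσpos z).ne'
  have hψC : ∀ z, ‖1 / σ (S₀ * Real.exp z)‖₊ ≤ (1 / σlo).toNNReal := fun z => by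
    rw [← NNReal.coe_le_coe, coe_nnnorm, Real.coe_toNNReal _ (by positivity),
      Real.norm_of_nonneg (one_div_pos.2 (hσpos z)).le]
    exact one_div_le_one_div_of_le hσlo (hσ _ (by positivity))
  have hτ01 : τ ∈ uIcc (0:ℝ) 1 := by rw [uIcc_of_le zero_le_one]; exact ⟨hτ.1.le, hτ.2⟩
  have h0τ : uIcc 0 τ ⊆ Icc (0:ℝ) 1 := by
    rw [uIcc_of_le hτ.1.le]; exact Icc_subset_Icc_right hτ.2
  have hg : IntervalIntegrable g volume 0 τ := hf.1.mono_set (uIcc_subset_uIcc_left hτ01)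
  have hsubst : ∫ t in (0:ℝ)..τ, g t / σ (S₀ * Real.exp (f t)) = F (f τ) :=
    calc ∫ t in (0:ℝ)..τ, g t / σ (S₀ * Real.exp (f t))
        = ∫ t in (0:ℝ)..τ, 1 / σ (S₀ * Real.exp (∫ s in (0:ℝ)..t, g s)) * g t :=
          integral_congr fun t ht => by rw [← hf.2.2 t (h0τ ht), one_div_mul_eq_div]
      _ = F (f τ) := by
          rw [hg.integral_comp_primitive_mul hψ hψC, hF, hf.2.2 τ (h0τ right_mem_uIcc)]
  have hw : IntervalIntegrable (fun t => g t / σ (S₀ * Real.exp (f t))) volume 0 τ := by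
    simpa only [Function.comp_apply, mul_one_div] using
      hg.mul_continuousOn (hψ.comp_continuousOn (hf.continuousOn.mono h0τ))
  have hCS := sq_integral_le_mul_integral_sq hτ.1.le hw
    (hf.2.1.mono_set (uIcc_subset_uIcc_left hτ01))
  rwa [hsubst, sub_zero] at hCS

theorem exists_float_path_of_fwd_path {κ τ : ℝ} (hτ : τ ∈ Ioo (0:ℝ) 1) {Finv : ℝ → ℝ}
    (hLeft : Function.LeftInverse Finv F) {f g : ℝ → ℝ} (hf : IsACLV σ S₀ f g)
    (hcons : 1 / (1 - τ) * (∫ t in τ..1, Real.exp (f t)) = κ * Real.exp (f 1)) :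
    ∃ c φ gφ, IsACLV σ (S₀ * Real.exp (Finv (c * τ))) φ gφ ∧
      (∫ u in (0:ℝ)..1, Real.exp (φ u)) = κ * Real.exp (φ 1) ∧
      1 / 2 * c ^ 2 * τ + 1 / (1 - τ) * energyLV σ (S₀ * Real.exp (Finv (c * τ))) φ gφ
        ≤ energyLV σ S₀ f g := by
  have hτ' : τ ∈ Ico (0:ℝ) 1 := ⟨hτ.1.le, hτ.2⟩
  refine ⟨F (f τ) / τ, tailPath τ f, tailDeriv τ g, ?_⟩
  rw [div_mul_cancel₀ _ hτ.1.ne', hLeft]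
  refine ⟨hf.tail hτ', (fwd_constraint_iff_tail hτ.2.ne).1 hcons, ?_⟩
  have hhead := sq_le_mul_integral_head hcont hσlo hσ hS₀ hF hf ⟨hτ.1, hτ.2.le⟩
  have hc : (F (f τ) / τ) ^ 2 * τ = F (f τ) ^ 2 / τ := by field_simp
  rw [energyLV_eq_head_add_tail hf hτ', mul_assoc (1 / 2 : ℝ), hc]
  gcongr
  rwa [div_le_iff₀' hτ.1]

theorem hasDerivAt_rightInverse_of_eq_integral {Finv : ℝ → ℝ} (hFmono : StrictMono F)
    (hRight : Function.RightInverse Finv F) (u : ℝ) :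
    HasDerivAt Finv (σ (S₀ * Real.exp (Finv u))) u := by
  have hσpos : ∀ z, 0 < σ (S₀ * Real.exp z) := fun z => hσlo.trans_le (hσ _ (by positivity))
  have hψ : Continuous fun z => 1 / σ (S₀ * Real.exp z) :=
    continuous_const.div (continuous_comp_mul_exp hcont hS₀) fun z => (hσpos z).ne'
  have hF' : ∀ y, HasDerivAt F (1 / σ (S₀ * Real.exp y)) y := fun y => by
    rw [show F = _ from funext hF]
    exact (hψ.integral_hasStrictDerivAt 0 y).hasDerivAt
  simpa only [one_div, inv_inv] using
    hFmono.hasDerivAt_rightInverse hRight hF' (fun y => one_div_ne_zero (hσpos y).ne') u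

theorem rightInverse_comp_mul_eq_integral {Finv : ℝ → ℝ} (hFmono : StrictMono F)
    (hLeft : Function.LeftInverse Finv F) (hRight : Function.RightInverse Finv F) (c t : ℝ) :
    Finv (c * t) = ∫ s in (0:ℝ)..t, c * σ (S₀ * Real.exp (Finv (c * s))) := by
  have hFinv := hasDerivAt_rightInverse_of_eq_integral hcont hσlo hσ hS₀ hF hFmono hRight
  have hF0 : Finv 0 = 0 := by simpa [hF] using hLeft 0
  have hderiv : ∀ s, HasDerivAt (fun s => Finv (c * s)) (c * σ (S₀ * Real.exp (Finv (c * s)))) s :=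
    fun s => by
      have hcomp := (hFinv (c * s)).comp s ((hasDerivAt_id s).const_mul c)
      rwa [mul_one, mul_comm] at hcomp
  rw [integral_eq_sub_of_hasDerivAt (fun s _ => hderiv s)
    ((continuous_mul_comp_rightInverse hcont hS₀ hFmono hRight c).intervalIntegrable 0 t),
    mul_zero, hF0, sub_zero]

theorem exists_fwd_path_of_float_path {κ τ : ℝ} (hτ : τ ∈ Ioo (0:ℝ) 1) {Finv : ℝ → ℝ}
    (hFmono : StrictMono F) (hLeft : Function.LeftInverse Finv F)
    (hRight : Function.RightInverse Finv F) (c : ℝ) {φ gφ : ℝ → ℝ}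
    (hφ : IsACLV σ (S₀ * Real.exp (Finv (c * τ))) φ gφ)
    (hcons : (∫ u in (0:ℝ)..1, Real.exp (φ u)) = κ * Real.exp (φ 1)) :
    ∃ f g, IsACLV σ S₀ f g ∧ 1 / (1 - τ) * (∫ t in τ..1, Real.exp (f t)) = κ * Real.exp (f 1) ∧
      energyLV σ S₀ f g
        = 1 / 2 * c ^ 2 * τ + 1 / (1 - τ) * energyLV σ (S₀ * Real.exp (Finv (c * τ))) φ gφ := by
  have hτ' : τ ∈ Ico (0:ℝ) 1 := ⟨hτ.1.le, hτ.2⟩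
  have hhead := rightInverse_comp_mul_eq_integral hcont hσlo hσ hS₀ hF hFmono hLeft hRight c
  set q : ℝ → ℝ := fun s => c * σ (S₀ * Real.exp (Finv (c * s)))
  have hq : IntervalIntegrable q volume 0 τ :=
    (continuous_mul_comp_rightInverse hcont hS₀ hFmono hRight c).intervalIntegrable 0 τ
  set g := gluedDeriv τ q gφ
  set f : ℝ → ℝ := fun t => ∫ s in (0:ℝ)..t, g s
  have hfhead : ∀ t ∈ Icc 0 τ, f t = Finv (c * t) := fun t ht => by
    rw [hhead]
    refine integral_congr ((gluedDeriv_eqOn_Iic τ q gφ).mono ?_)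
    rw [uIcc_of_le ht.1]
    exact Icc_subset_Iic_self.trans (Iic_subset_Iic.2 ht.2)
  have hx : S₀ * Real.exp (f τ) = S₀ * Real.exp (Finv (c * τ)) := by
    rw [hfhead τ ⟨hτ.1.le, le_rfl⟩]
  have hderiv : EqOn (tailDeriv τ g) gφ (Ioc 0 1) :=
    (tailDeriv_gluedDeriv hτ.2 q gφ).mono Ioc_subset_Ioi_self
  have htailPath : EqOn (tailPath τ f) φ (Icc 0 1) :=
    tailPath_primitive_gluedDeriv hτ' hq hφ.1 hφ.2.2
  have hQhead : EqOn (fun t => (g t / σ (S₀ * Real.exp (f t))) ^ 2) (fun _ => c ^ 2) (Icc 0 τ) :=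
    fun t ht => by
      simp only [g, gluedDeriv_eqOn_Iic τ q gφ ht.2, hfhead t ht, q]
      rw [mul_div_cancel_right₀ _ (hσlo.trans_le (hσ _ (by positivity))).ne']
  have hf : IsACLV σ S₀ f g := isACLV_of_tail hτ.2.ne
    ((intervalIntegrable_gluedDeriv hτ' hq hφ.1).mono_set (uIcc_subset_uIcc_left
      (by rw [uIcc_of_le zero_le_one]; exact ⟨hτ.1.le, hτ.2.le⟩)))
    (intervalIntegrable_const.congr (hQhead.symm.mono (by
      rw [uIoc_of_le hτ.1.le]; exact Ioc_subset_Icc_self)))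
    (hx ▸ hφ.congr htailPath hderiv) fun _ _ => rfl
  refine ⟨f, g, hf,
    (fwd_constraint_iff_tail hτ.2.ne).2 ((float_constraint_congr htailPath).2 hcons), ?_⟩
  rw [energyLV_eq_head_add_tail hf hτ', integral_congr (hQhead.mono (by
    rw [uIcc_of_le hτ.1.le])), intervalIntegral.integral_const, hx,
    energyLV_congr htailPath hderiv, smul_eq_mul, sub_zero]
  ring

end LocalVolatility

theorem Ifloatfwd_double_layer_general
    (σ : ℝ → ℝ) (σlo σhi : ℝ)
    (hcont : ContinuousOn σ (Ici 0))
    (hσlo : 0 < σlo)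
    (hbdd : ∀ x : ℝ, 0 ≤ x → σlo ≤ σ x ∧ σ x ≤ σhi)
    (S₀ κ τ : ℝ) (hS₀ : 0 < S₀) (hκ : 0 < κ) (hτ : τ ∈ Ioo (0:ℝ) 1)
    (F Finv : ℝ → ℝ)
    (hF : ∀ y : ℝ, F y = ∫ z in (0:ℝ)..y, 1 / σ (S₀ * Real.exp z))
    (hFmono : StrictMono F)
    (hLeft : Function.LeftInverse Finv F)
    (hRight : Function.RightInverse Finv F) :
    Ifloatfwd σ S₀ κ τ =
      ⨅ c : ℝ, ((1 / 2) * c ^ 2 * τ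
        + (1 / (1 - τ)) * Ifloat σ (S₀ * Real.exp (Finv (c * τ))) κ) := by
  have hσ : ∀ x, 0 ≤ x → σlo ≤ σ x := fun x hx => (hbdd x hx).1
  unfold Ifloatfwd Ifloat
  refine csInf_eq_ciInf_add_mul_csInf (A := fun c => 1 / 2 * c ^ 2 * τ)
    (one_div_pos.2 (sub_pos.2 hτ.2)) (fun c => mul_nonneg (by positivity) hτ.1.le) (fun c => ?_)
    (fun c e ⟨φ, gφ, _, _, he⟩ => he ▸ energyLV_nonneg _ _ _)
    (fun c e ⟨φ, gφ, hφ, hcons, he⟩ => ?_) (fun e ⟨f, g, hf, hcons, he⟩ => ?_)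
  · obtain ⟨φ, gφ, hφ, hcons⟩ := exists_float_path hcont hσlo hσ (x := S₀ * Real.exp (Finv (c * τ)))
      (by positivity) hκ
    exact ⟨_, φ, gφ, hφ, hcons, rfl⟩
  · obtain ⟨f, g, hf, hfcons, hE⟩ :=
      exists_fwd_path_of_float_path hcont hσlo hσ hS₀ hF hτ hFmono hLeft hRight c hφ hcons
    exact ⟨f, g, hf, hfcons, he ▸ hE.symm⟩
  · obtain ⟨c, φ, gφ, hφ, hφcons, hle⟩ :=
      exists_float_path_of_fwd_path hcont hσlo hσ hS₀ hF hτ hLeft hf hcons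
    exact ⟨c, _, ⟨φ, gφ, hφ, hφcons, rfl⟩, he ▸ hle⟩

/-- Under the local volatility assumptions (continuity, uniform
ellipticity `0 < σ̲ ≤ σ ≤ σ̄ < ∞` on `[0,∞)`, and Hölder continuity of `σ ∘ exp`),
for `S₀, κ > 0` and `τ ∈ (0,1)`,
`I_f(S₀, κ, τ) = inf_{c ∈ ℝ} { (1/2)c²τ + (1/(1−τ))·I_float(S₀·exp(F⁻¹(cτ)), κ) }`,
where `F(y) = ∫₀^y dz/σ(S₀·e^z)` is a strictly increasing bijection of `ℝ` with
(two-sided) inverse `F⁻¹ = Finv`. -/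
theorem Ifloatfwd_double_layer
    (σ : ℝ → ℝ) (σlo σhi M α : ℝ)
    (hcont : ContinuousOn σ (Ici 0))
    (hσlo : 0 < σlo)
    (hbdd : ∀ x : ℝ, 0 ≤ x → σlo ≤ σ x ∧ σ x ≤ σhi)
    (hM : 0 < M) (hα : 0 < α)
    (hHolder : ∀ x y : ℝ, |σ (Real.exp x) - σ (Real.exp y)| ≤ M * |x - y| ^ α)
    (S₀ κ τ : ℝ) (hS₀ : 0 < S₀) (hκ : 0 < κ) (hτ : τ ∈ Ioo (0:ℝ) 1)
    (F Finv : ℝ → ℝ)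
    (hF : ∀ y : ℝ, F y = ∫ z in (0:ℝ)..y, 1 / σ (S₀ * Real.exp z))
    (hFmono : StrictMono F)
    (hLeft : Function.LeftInverse Finv F)
    (hRight : Function.RightInverse Finv F) :
    Ifloatfwd σ S₀ κ τ =
      ⨅ c : ℝ, ((1 / 2) * c ^ 2 * τ
        + (1 / (1 - τ)) * Ifloat σ (S₀ * Real.exp (Finv (c * τ))) κ) :=
  Ifloatfwd_double_layer_general σ σlo σhi hcont hσlo hbdd S₀ κ τ hS₀ hκ hτ F Finv hF hFmono hLeft
    hRight
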